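/- arXiv:math/0702654 — 3 statements merged into one kernel-verified Lean document; each statement's English description precedes it below -/
import Mathlib

section
/- Let R be an associative ring, 𝒜 a ring of central cohomology operations on D(R), φ ∈ 𝒜^d a homogeneous element, and M, N complexes of R-modules. Set ℳ = Ext*_R(M,N). Then there is an exact sequence of graded 𝒜-modules 0 → (ℳ/φℳ)(−1) → Ext*_R(K(φ; M), N) → (0 :_ℳ φ)(−d) → 0, where (0 :_ℳ φ) = { x ∈ ℳ : φx = 0 } and ℳ(j) denotes the twist with ℳ(j)^i = ℳ^{i+j}. -/
/-! Core framework: complexes of modules, semiprojective complexes, hard truncations,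
syzygy complexes, the derived category, Ext groups, central cohomology operations,
graded supports and thick subcategories.

Conventions: we use cochain complexes indexed by `ℤ`; the homological degree `i`
of the paper corresponds to the cochain degree `-i`, so that the homological
shift `Σ^d` is the categorical shift `⟦d⟧` and the homological hard truncation
`P_{⩾ n}` is the cochain hard truncation in degrees `⩽ -n`. -/

open CategoryTheory Limits Pretriangulated

universe w v u

namespace CohSupp

variable (R : Type u) [Ring R]

/-- Complexes of left `R`-modules (cochain convention). -/
abbrev Cx := CochainComplex (ModuleCat.{u} R) ℤ

variable {R}

/-- A complex `P` is semiprojective if each component is a projective module and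
`Hom_R(P, -)` preserves quasi-isomorphisms, i.e. composition with any
quasi-isomorphism induces a bijection on homotopy classes of morphisms from `P`. -/
def Semiprojective (P : Cx R) : Prop :=
  (∀ i : ℤ, Projective (P.X i)) ∧
    ∀ (N N' : Cx R) (g : N ⟶ N'), QuasiIso g →
      Function.Bijective
        (fun f : (HomotopyCategory.quotient (ModuleCat.{u} R) (ComplexShape.up ℤ)).obj P ⟶
            (HomotopyCategory.quotient (ModuleCat.{u} R) (ComplexShape.up ℤ)).obj N =>
          f ≫ (HomotopyCategory.quotient (ModuleCat.{u} R) (ComplexShape.up ℤ)).map g)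

/-- Hard (stupid) truncation of a cochain complex, keeping the components in
cochain degrees `⩽ m`. -/
noncomputable def hardTruncLE (P : Cx R) (m : ℤ) : Cx R where
  X i := if i ≤ m then P.X i else ModuleCat.of R PUnit
  d i j :=
    if hi : i ≤ m then
      if hj : j ≤ m then
        eqToHom (if_pos hi) ≫ P.d i j ≫ eqToHom (if_pos hj).symm
      else 0
    else 0
  shape i j h := by
    try dsimp only
    by_cases hi : i ≤ m <;> by_cases hj : j ≤ m <;> simp [hi, hj, P.shape i j h]
  d_comp_d' i j k _ _ := by
    try dsimp only
    by_cases hi : i ≤ m <;> by_cases hj : j ≤ m <;> by_cases hk : k ≤ m <;>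
      simp [hi, hj, hk]

/-- The hard truncation `P_{⩾ n}` in *homological* degrees `⩾ n`, i.e. in cochain
degrees `⩽ -n`. -/
noncomputable def truncGE (P : Cx R) (n : ℤ) : Cx R := hardTruncLE P (-n)

/-- The `n`-th syzygy complex `Ω^n = Σ^{-n}(P_{⩾ n})` associated to a
(semiprojective) complex `P`. -/
noncomputable def syzygy (P : Cx R) (n : ℤ) : Cx R := (truncGE P n)⟦(-n : ℤ)⟧

/-- The complex consisting of a single module placed in homological degree `n`
(cochain degree `-n`); this is `Σ^n` applied to the module. -/
noncomputable def singleMod (n : ℤ) (W : ModuleCat.{u} R) : Cx R :=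
  (HomologicalComplex.single (ModuleCat.{u} R) (ComplexShape.up ℤ) (-n)).obj W

/-- A module viewed as a complex concentrated in degree `0`. -/
noncomputable def ofMod (W : Type u) [AddCommGroup W] [Module R W] : Cx R :=
  singleMod 0 (ModuleCat.of R W)

variable (R) in
/-- The ring `R`, viewed as a complex concentrated in degree `0`. -/
noncomputable def selfCx : Cx R := ofMod R

/-- The homology of a complex in *homological* degree `i` (cochain degree `-i`). -/
noncomputable def hgy (M : Cx R) (i : ℤ) : ModuleCat.{u} R := M.homology (-i)

/-- The total homology of `M` is a finitely generated `R`-module: each homology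
module is finitely generated and all but finitely many vanish. -/
def FGTotalHomology (M : Cx R) : Prop :=
  (∀ i : ℤ, Module.Finite R (M.homology i)) ∧
    ∃ b : ℕ, ∀ i : ℤ, (b : ℤ) ≤ |i| → IsZero (M.homology i)

/-- `M` has bounded homology. -/
def BoundedHomology (M : Cx R) : Prop :=
  ∃ b : ℕ, ∀ i : ℤ, (b : ℤ) ≤ |i| → IsZero (M.homology i)

section Derived

variable [HasDerivedCategory.{w} (ModuleCat.{u} R)]

variable (R) in
/-- The derived category of `R`. -/
abbrev D := DerivedCategory (ModuleCat.{u} R)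

/-- The localization functor. -/
noncomputable abbrev dQ : Cx R ⥤ D R := DerivedCategory.Q

/-- `Ext^i` of two objects of the derived category:
morphisms `X ⟶ Y⟦i⟧`. -/
abbrev ExtO (X Y : D R) (i : ℤ) : Type w := X ⟶ Y⟦i⟧

/-- Transport along an equality of degrees. -/
def extCast {X Y : D R} {i j : ℤ} (h : i = j) (x : ExtO X Y i) : ExtO X Y j := h ▸ x

/-- The (Yoneda) composition product on graded Ext: for `α` of degree `i`
and `β` of degree `j`, `excomp h β α` is the composite `β ∘ α` of degree `k = i + j`. -/
noncomputable def excomp {X Y Z : D R} {i j k : ℤ} (h : i + j = k)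
    (β : ExtO Y Z j) (α : ExtO X Y i) : ExtO X Z k :=
  α ≫ β⟦i⟧' ≫ (shiftFunctorAdd' (D R) j i k (by omega)).inv.app Z

variable (R) in
/-- A ring of central cohomology operations on `D(R)`: a non-negatively graded
commutative ring `A` (with grading `ℬ`, concentrated in even degrees unless `2 = 0`
in `A`), together with graded ring homomorphisms `ζ_X : A → Ext*(X,X)` for every
object `X` of `D(R)`, satisfying the centrality condition
`ξ · ζ_X(a) = ζ_Y(a) · ξ`. -/
structure CentralOps (A : Type v) [CommRing A] (ℬ : ℤ → AddSubgroup A) [GradedRing ℬ] where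
  nonneg : ∀ i : ℤ, i < 0 → ℬ i = ⊥
  parity : (∀ i : ℤ, Odd i → ℬ i = ⊥) ∨ (∀ a : A, a + a = 0)
  zeta : ∀ (X : D R) (i : ℤ), ℬ i → ExtO X X i
  zeta_add : ∀ (X : D R) (i : ℤ) (a b : ℬ i), zeta X i (a + b) = zeta X i a + zeta X i b
  zeta_one : ∀ X : D R, zeta X 0 ⟨1, SetLike.one_mem_graded ℬ⟩ = (shiftFunctorZero (D R) ℤ).inv.app X
  zeta_mul : ∀ (X : D R) (i j : ℤ) (a : ℬ i) (b : ℬ j),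
    zeta X (i + j) ⟨(a : A) * (b : A), SetLike.mul_mem_graded a.2 b.2⟩ =
      excomp rfl (zeta X j b) (zeta X i a)
  central : ∀ (X Y : D R) (d i : ℤ) (ξ : ExtO X Y d) (a : ℬ i),
    excomp rfl ξ (zeta X i a) = excomp (by omega) (zeta Y i a) ξ

variable {A : Type v} [CommRing A] {ℬ : ℤ → AddSubgroup A} [GradedRing ℬ]

/-- The action of a homogeneous element `a ∈ A^i` on `Ext^j(X,Y)`, making the
graded Ext a graded `A`-module. -/
noncomputable def act (Z : CentralOps R A ℬ) {X Y : D R} {i j : ℤ}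
    (a : ℬ i) (x : ExtO X Y j) : ExtO X Y (i + j) :=
  excomp (by omega) (Z.zeta Y i a) x

/-- A graded `A`-submodule of `Ext*(X,Y)`. -/
structure ExtSub (Z : CentralOps R A ℬ) (X Y : D R) where
  carrier : ∀ j : ℤ, AddSubgroup (ExtO X Y j)
  act_mem : ∀ {i j : ℤ} (a : ℬ i) {x : ExtO X Y j}, x ∈ carrier j → act Z a x ∈ carrier (i + j)

/-- The graded `A`-module `Ext*(X,Y)` is noetherian: every ascending chain of
graded submodules stabilizes. -/
def NoethAll (Z : CentralOps R A ℬ) (X Y : D R) : Prop :=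
  ∀ f : ℕ → ExtSub Z X Y,
    (∀ (n : ℕ) (j : ℤ), (f n).carrier j ≤ (f (n + 1)).carrier j) →
    ∃ n : ℕ, ∀ m : ℕ, n ≤ m → ∀ j : ℤ, (f m).carrier j = (f n).carrier j

/-- The graded `A`-module `Ext^{⩾ j₀}(X,Y)` is noetherian. -/
def NoethFrom (Z : CentralOps R A ℬ) (X Y : D R) (j₀ : ℤ) : Prop :=
  ∀ f : ℕ → ExtSub Z X Y,
    (∀ (n : ℕ) (j : ℤ), j < j₀ → (f n).carrier j = ⊥) →
    (∀ (n : ℕ) (j : ℤ), (f n).carrier j ≤ (f (n + 1)).carrier j) →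
    ∃ n : ℕ, ∀ m : ℕ, n ≤ m → ∀ j : ℤ, (f m).carrier j = (f n).carrier j

/-- The graded `A`-module `Ext*(X,Y)` is eventually noetherian:
`Ext^{⩾ j}(X,Y)` is a noetherian `A`-module for all `j ≫ 0`. -/
def EvNoeth (Z : CentralOps R A ℬ) (X Y : D R) : Prop :=
  ∃ j₀ : ℤ, ∀ j : ℤ, j₀ ≤ j → NoethFrom Z X Y j

/-- The graded `A`-module `Ext*(X,Y)` is eventually zero. -/
def EvZero (X Y : D R) : Prop :=
  ∃ j₀ : ℤ, ∀ j : ℤ, j₀ ≤ j → Subsingleton (ExtO X Y j)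

end Derived

variable {A : Type v} [CommRing A] (ℬ : ℤ → AddSubgroup A) [GradedRing ℬ]

/-- `Proj A`: the homogeneous prime ideals of `A` not containing `A^{⩾ 1}`. -/
def ProjSet : Set (Ideal A) :=
  {p | p.IsPrime ∧ Ideal.IsHomogeneous ℬ p ∧ ¬ ∀ i : ℤ, 1 ≤ i → (ℬ i : Set A) ⊆ p}

/-- Zariski closed subsets of `Proj A`: zero sets of homogeneous ideals. -/
def ProjClosed (C : Set (Ideal A)) : Prop :=
  ∃ J : Ideal A, Ideal.IsHomogeneous ℬ J ∧ C = {p | p ∈ ProjSet ℬ ∧ J ≤ p}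

/-- `X` is a closed subset of the subspace `S` of `Proj A`. -/
def ClosedIn (X S : Set (Ideal A)) : Prop :=
  X ⊆ S ∧ ∃ C : Set (Ideal A), ProjClosed ℬ C ∧ X = S ∩ C

/-- `X` is an irreducible subset of `Proj A`. -/
def IrreducibleIn (X : Set (Ideal A)) : Prop :=
  X.Nonempty ∧ ∀ C₁ C₂ : Set (Ideal A), ProjClosed ℬ C₁ → ProjClosed ℬ C₂ →
    X ⊆ C₁ ∪ C₂ → X ⊆ C₁ ∨ X ⊆ C₂

section Derived2

variable [HasDerivedCategory.{w} (ModuleCat.{u} R)]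
variable {ℬ}

/-- The cohomological support `Supp*_A(X,Y) ⊆ Proj A`: the primes `p` such that the
localization of the graded `A`-module `Ext*(X,Y)` at `p` is nonzero, i.e. such that
some homogeneous element of `Ext*(X,Y)` is not annihilated by any homogeneous
element outside of `p`. -/
noncomputable def supp (Z : CentralOps R A ℬ) (X Y : D R) : Set (Ideal A) :=
  {p | p ∈ ProjSet ℬ ∧ ∃ (j : ℤ) (x : ExtO X Y j), x ≠ 0 ∧
    ∀ (i : ℤ) (s : ℬ i), (s : A) ∉ p → act Z s x ≠ 0}

/-- A thick subcategory of `D(R)` (as a set of objects): closed under isomorphisms,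
shifts, mapping cones (two-out-of-three in distinguished triangles) and retracts
(direct summands), and containing the zero objects. -/
def IsThickSet (S : Set (D R)) : Prop :=
  (∀ X : D R, IsZero X → X ∈ S) ∧
  (∀ X Y : D R, (X ≅ Y) → X ∈ S → Y ∈ S) ∧
  (∀ X : D R, X ∈ S → X⟦(1 : ℤ)⟧ ∈ S ∧ X⟦(-1 : ℤ)⟧ ∈ S) ∧
  (∀ T : Triangle (D R), T ∈ (distTriang (D R)) → T.obj₁ ∈ S → T.obj₂ ∈ S → T.obj₃ ∈ S) ∧
  (∀ (X Y : D R) (ι : X ⟶ Y) (ρ : Y ⟶ X), ι ≫ ρ = 𝟙 X → Y ∈ S → X ∈ S)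

/-- `X` belongs to the thick closure of `G` in `D(R)`. -/
def InThick (G X : D R) : Prop := ∀ S : Set (D R), IsThickSet S → G ∈ S → X ∈ S

end Derived2

end CohSupp

/-! Apply `Hom(-, Σʲ N)` to the triangle `M → Σᵈ M → K(φ; M) → Σ M`. Under the identifications
`Hom(Σᵉ M, Σʲ N) ≅ Ext^{j-e}(M, N)` obtained by shifting, precomposition with `ζ_M(φ)` becomes
multiplication by `φ` because the operations are central, so the long exact sequence breaks into
the short exact sequences `0 → ℳ/φℳ → Ext(K(φ; M), N) → (0 :_ℳ φ) → 0` with the stated twists. -/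

namespace CategoryTheory

variable {C : Type*} [Category* C] [HasShift C ℤ]

namespace ShiftedHom

variable {X Y Z : C}

noncomputable def toShiftNeg (e : ℤ) (Y : C) : ShiftedHom Y (Y⟦e⟧) (-e) :=
  (shiftFunctorCompIsoId C e (-e) (add_neg_cancel e)).inv.app Y

lemma comp_toShiftNeg {e : ℤ} (f : ShiftedHom X Y e) :
    f.comp (toShiftNeg e Y) (neg_add_cancel e) = mk₀ 0 rfl (f : X ⟶ Y⟦e⟧) := by
  dsimp only [comp, toShiftNeg]
  rw [shift_shiftFunctorCompIsoId_inv_app]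
  simp [shiftFunctorCompIsoId, mk₀, shiftFunctorZero']

lemma toShiftNeg_comp_id (e : ℤ) (Y : C) :
    (toShiftNeg e Y).comp (𝟙 (Y⟦e⟧) : ShiftedHom (Y⟦e⟧) Y e) (add_neg_cancel e) =
      mk₀ 0 rfl (𝟙 Y) := by
  simp [comp, toShiftNeg, shiftFunctorCompIsoId, mk₀, shiftFunctorZero']

variable [Preadditive C] [∀ n : ℤ, (shiftFunctor C n).Additive]

noncomputable def shiftAddEquiv (e : ℤ) (Y Z : C) {k m : ℤ} (h : k + e = m) :
    ShiftedHom Y Z k ≃+ ShiftedHom (Y⟦e⟧) Z m where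
  -- `x ↦ x⟦e⟧'`, followed by `Z⟦k⟧⟦e⟧ ≅ Z⟦m⟧`
  toFun x := ShiftedHom.comp (𝟙 (Y⟦e⟧) : ShiftedHom (Y⟦e⟧) Y e) x h
  invFun v := (toShiftNeg e Y).comp v (by omega)
  left_inv x := by
    dsimp only
    rw [← comp_assoc _ _ _ (add_neg_cancel e) h (by omega), toShiftNeg_comp_id, mk₀_id_comp]
  right_inv v := by
    dsimp only
    rw [← comp_assoc _ _ _ (neg_add_cancel e) (by omega) (by omega), comp_toShiftNeg, mk₀_comp,
      Category.id_comp]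
  map_add' _ _ := comp_add _ _ _ _

variable {e k m : ℤ} (h : k + e = m)

lemma hom_comp_shiftAddEquiv (f : X ⟶ Y⟦e⟧) (x : ShiftedHom Y Z k) :
    f ≫ shiftAddEquiv e Y Z h x = ShiftedHom.comp (f : ShiftedHom X Y e) x h := by
  simp [shiftAddEquiv, comp]

lemma exists_eq_comp_iff (f : ShiftedHom X Y e) (x : ShiftedHom X Z m) :
    (∃ y : ShiftedHom Y Z k, x = f.comp y h) ↔
      ∃ w : Y⟦e⟧ ⟶ Z⟦m⟧, x = (f : X ⟶ Y⟦e⟧) ≫ w := by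
  simp only [(shiftAddEquiv e Y Z h).surjective.exists, hom_comp_shiftAddEquiv]

lemma shiftAddEquiv_symm_comp {a k' m' : ℤ} (h' : k' + e = m') (v : ShiftedHom (Y⟦e⟧) Z m)
    {W : C} (c : ShiftedHom Z W a) (p : a + m = m') (p' : a + k = k') :
    (shiftAddEquiv e Y W h').symm (v.comp c p) = ((shiftAddEquiv e Y Z h).symm v).comp c p' :=
  (comp_assoc _ _ _ _ _ (by omega)).symm

end ShiftedHom

variable [Preadditive C] [HasZeroObject C] [∀ n : ℤ, (CategoryTheory.shiftFunctor C n).Additive]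
  [Pretriangulated C]

namespace Pretriangulated.Triangle

variable {T : Triangle C}

lemma yoneda_exact₁ (hT : T ∈ distTriang C) {W : C} (x : T.obj₁ ⟶ W)
    (hx : T.mor₃ ≫ x⟦(1 : ℤ)⟧' = 0) : ∃ y : T.obj₂ ⟶ W, x = T.mor₁ ≫ y := by
  -- `T.invRotate.mor₁ ≫ x = 0`, written out
  have hrot : (-T.mor₃⟦(-1 : ℤ)⟧' ≫
      (shiftFunctorCompIsoId C 1 (-1) (by omega)).hom.app T.obj₁) ≫ x = 0 := by
    have := (shiftFunctorCompIsoId C (1 : ℤ) (-1) (by omega)).hom.naturality x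
    dsimp only [Functor.comp_obj, Functor.comp_map, Functor.id_obj, Functor.id_map] at this
    rw [Preadditive.neg_comp, Category.assoc, ← this, ← Functor.map_comp_assoc, hx]
    simp
  exact yoneda_exact₂ _ (inv_rot_of_distTriang _ hT) x hrot

lemma mor₃_comp_eq_zero_iff (hT : T ∈ distTriang C) {W : C} {n m : ℤ}
    (x : ShiftedHom T.obj₁ W n) (p : n + 1 = m) :
    ShiftedHom.comp (T.mor₃ : ShiftedHom T.obj₃ T.obj₁ (1 : ℤ)) x p = 0 ↔
      ∃ y : T.obj₂ ⟶ W⟦n⟧, x = T.mor₁ ≫ y := by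
  have hcomp : ShiftedHom.comp (T.mor₃ : ShiftedHom T.obj₃ T.obj₁ (1 : ℤ)) x p =
      (T.mor₃ ≫ x⟦(1 : ℤ)⟧') ≫ (CategoryTheory.shiftFunctorAdd' C n 1 m p).inv.app W :=
    (Category.assoc _ _ _).symm
  rw [hcomp, Preadditive.IsIso.comp_right_eq_zero]
  refine ⟨yoneda_exact₁ hT x, ?_⟩
  rintro ⟨y, rfl⟩
  simp [comp_distTriang_mor_zero₃₁_assoc _ hT]

lemma mor₂_comp_eq_zero_iff (hT : T ∈ distTriang C) {W : C} (z : T.obj₃ ⟶ W) :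
    T.mor₂ ≫ z = 0 ↔ ∃ w : T.obj₁⟦(1 : ℤ)⟧ ⟶ W, z = T.mor₃ ≫ w := by
  refine ⟨yoneda_exact₃ T hT z, ?_⟩
  rintro ⟨w, rfl⟩
  simp [comp_distTriang_mor_zero₂₃_assoc _ hT]

lemma mor₁_comp_eq_zero_iff (hT : T ∈ distTriang C) {W : C} (y : T.obj₂ ⟶ W) :
    T.mor₁ ≫ y = 0 ↔ ∃ z : T.obj₃ ⟶ W, y = T.mor₂ ≫ z := by
  refine ⟨yoneda_exact₂ T hT y, ?_⟩
  rintro ⟨z, rfl⟩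
  simp [comp_distTriang_mor_zero₁₂_assoc _ hT]

end Pretriangulated.Triangle

end CategoryTheory

namespace CohSupp

section

variable {R : Type u} [Ring R] [HasDerivedCategory.{w} (ModuleCat.{u} R)]
  {A : Type v} [CommRing A] {ℬ : ℤ → AddSubgroup A} [GradedRing ℬ] {X Y : D R}

lemma extCast_comp {W : D R} {a b c c' : ℤ} (f : ShiftedHom X W a) (y : ShiftedHom W Y b)
    (p : b + a = c) (e : c = c') : extCast e (f.comp y p) = f.comp y (p.trans e) := by
  subst e; rfl

lemma extCast_eq_zero_iff {i j : ℤ} (e : i = j) (x : ExtO X Y i) : extCast e x = 0 ↔ x = 0 := by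
  subst e; rfl

lemma act_eq_comp (Z : CentralOps R A ℬ) {i j : ℤ} (a : ℬ i) (x : ExtO X Y j) :
    act Z a x = ShiftedHom.comp x (Z.zeta Y i a) rfl := rfl

lemma act_eq_zeta_comp (Z : CentralOps R A ℬ) {i j : ℤ} (a : ℬ i) (x : ExtO X Y j) :
    act Z a x = ShiftedHom.comp (Z.zeta X i a) x (add_comm j i) :=
  (Z.central X Y j i x a).symm

end

/-- Let `A` be a ring of central cohomology operations on `D(R)`,
`φ ∈ A^d` homogeneous and `M`, `N` complexes of `R`-modules.  Writing `ℳ = Ext*_R(M,N)`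
and `K(φ;M)` for the mapping cone of `ζ_M(φ) : M → Σ^d M`, there is an exact sequence
of graded `A`-modules `0 → (ℳ/φℳ)(-1) → Ext*_R(K(φ;M),N) → (0 :_ℳ φ)(-d) → 0`.
The sequence is encoded degreewise by a monomorphism `α` from `ℳ(-1)` with kernel
`φ·ℳ` and an `A`-linear map `β` with image the annihilator of `φ`, exact in the
middle. -/
theorem statement_7 {R : Type u} [Ring R] [HasDerivedCategory.{w} (ModuleCat.{u} R)]
    {A : Type v} [CommRing A] {ℬ : ℤ → AddSubgroup A} [GradedRing ℬ]
    (Z : CentralOps R A ℬ) (d : ℤ) (φ : ℬ d) (M N : Cx R)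
    (Kφ : D R) (g : (dQ.obj M)⟦d⟧ ⟶ Kφ) (h : Kφ ⟶ (dQ.obj M)⟦(1 : ℤ)⟧)
    (hT : Triangle.mk (Z.zeta (dQ.obj M) d φ) g h ∈ (distTriang (D R))) :
    ∃ (α : ∀ j : ℤ, ExtO (dQ.obj M) (dQ.obj N) (j - 1) →+ ExtO Kφ (dQ.obj N) j)
      (β : ∀ j : ℤ, ExtO Kφ (dQ.obj N) j →+ ExtO (dQ.obj M) (dQ.obj N) (j - d)),
      (∀ (i : ℤ) (a : ℬ i) (j : ℤ) (x : ExtO (dQ.obj M) (dQ.obj N) (j - 1)),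
        α (i + j) (extCast (by ring) (act Z a x)) = act Z a (α j x)) ∧
      (∀ (i : ℤ) (a : ℬ i) (j : ℤ) (z : ExtO Kφ (dQ.obj N) j),
        β (i + j) (act Z a z) = extCast (by ring) (act Z a (β j z))) ∧
      (∀ (j : ℤ) (x : ExtO (dQ.obj M) (dQ.obj N) (j - 1)),
        α j x = 0 ↔ ∃ y : ExtO (dQ.obj M) (dQ.obj N) (j - 1 - d),
          x = extCast (by ring) (act Z φ y)) ∧
      (∀ (j : ℤ) (z : ExtO Kφ (dQ.obj N) j), β j z = 0 ↔ ∃ x, z = α j x) ∧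
      (∀ (j : ℤ) (x : ExtO (dQ.obj M) (dQ.obj N) (j - d)),
        (∃ z, β j z = x) ↔ act Z φ x = 0) := by
  let E₁ (j : ℤ) := ShiftedHom.shiftAddEquiv 1 (dQ.obj M) (dQ.obj N) (sub_add_cancel j 1)
  let Ed (j : ℤ) := ShiftedHom.shiftAddEquiv d (dQ.obj M) (dQ.obj N) (sub_add_cancel j d)
  let α (j : ℤ) := (Preadditive.leftComp _ h).comp (E₁ j).toAddMonoidHom
  let β (j : ℤ) := (Ed j).symm.toAddMonoidHom.comp (Preadditive.leftComp _ g)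
  have hα (j : ℤ) (x) : α j x = h ≫ E₁ j x := rfl
  have hβ (j : ℤ) (z) : β j z = (Ed j).symm (g ≫ z) := rfl
  refine ⟨α, β, fun i a j x => ?_, fun i a j z => ?_, fun j x => ?_, fun j z => ?_,
    fun j x => ?_⟩
  · rw [hα, hα, ShiftedHom.hom_comp_shiftAddEquiv, ShiftedHom.hom_comp_shiftAddEquiv,
      act_eq_comp, act_eq_comp, extCast_comp]
    exact (ShiftedHom.comp_assoc _ _ _ _ _ (by omega)).symm
  · have hgz : g ≫ ShiftedHom.comp z (Z.zeta (dQ.obj N) i a) rfl =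
        ShiftedHom.comp (g ≫ z : ShiftedHom _ _ j) (Z.zeta (dQ.obj N) i a) rfl :=
      (Category.assoc _ _ _).symm
    rw [hβ, hβ, act_eq_comp, act_eq_comp, extCast_comp, hgz,
      ShiftedHom.shiftAddEquiv_symm_comp]
  · rw [hα, ShiftedHom.hom_comp_shiftAddEquiv]
    refine (Triangle.mor₃_comp_eq_zero_iff hT x _).trans ?_
    simp only [act_eq_zeta_comp, extCast_comp]
    exact (ShiftedHom.exists_eq_comp_iff _ _ _).symm
  · rw [hβ, AddEquiv.map_eq_zero_iff]
    exact (Triangle.mor₂_comp_eq_zero_iff hT z).trans (E₁ j).surjective.exists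
  · simp only [hβ, AddEquiv.symm_apply_eq]
    rw [act_eq_zeta_comp, ← extCast_eq_zero_iff (show d + (j - d) = j by omega), extCast_comp,
      ← ShiftedHom.hom_comp_shiftAddEquiv]
    exact (exists_congr fun _ => eq_comm).trans (Triangle.mor₁_comp_eq_zero_iff hT _).symm

end CohSupp
end

section
/- Let R be an associative ring, 𝒜 a ring of central cohomology operations on D(R), and M a complex of R-modules. Then the full subcategory of D(R) consisting of those complexes L for which the graded 𝒜-module Ext*_R(M,L) is eventually noetherian is a thick subcategory of D(R); the same holds for the complexes L such that Ext*_R(L,M) is eventually noetherian. -/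
/-! Core framework: complexes of modules, semiprojective complexes, hard truncations,
syzygy complexes, the derived category, Ext groups, central cohomology operations,
graded supports and thick subcategories.

Conventions: we use cochain complexes indexed by `ℤ`; the homological degree `i`
of the paper corresponds to the cochain degree `-i`, so that the homological
shift `Σ^d` is the categorical shift `⟦d⟧` and the homological hard truncation
`P_{⩾ n}` is the cochain hard truncation in degrees `⩽ -n`. -/

open CategoryTheory Limits Pretriangulated

universe w v u

/-!
`Ext*(X, -)` and `Ext*(-, Y)` turn distinguished triangles into long exact sequences of graded
`A`-modules: centrality of the operations makes pre- and postcomposition with a fixed class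
`A`-linear (of some degree). A graded submodule of an eventually noetherian module is
eventually noetherian, and in an exact sequence `E₁ → E → E₂` with `E₁`, `E₂` eventually
noetherian so is `E`: an ascending chain in `E` is controlled by its image chain in `E₂` and
its preimage chain in `E₁`, both of which stabilise. Shifts and retracts are handled by the
first observation, since they give injective maps on `Ext`.
-/

open CategoryTheory Limits Pretriangulated

namespace CategoryTheory.ShiftedHom

variable {C : Type*} [Category C] [Preadditive C] {M : Type*} [AddGroup M] [HasShift C M]

instance mono_mk₀ {X Y : C} (m₀ : M) (hm₀ : m₀ = 0) (f : X ⟶ Y) [Mono f] :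
    Mono (mk₀ m₀ hm₀ f) := by
  unfold mk₀; infer_instance

instance epi_mk₀ {X Y : C} (m₀ : M) (hm₀ : m₀ = 0) (f : X ⟶ Y) [Epi f] :
    Epi (mk₀ m₀ hm₀ f) := by
  unfold mk₀; infer_instance

lemma comp_eq_zero_iff_of_mono {X Y Y' : C} {a b c : M} (x : ShiftedHom X Y a)
    (ξ : ShiftedHom Y Y' b) [Mono ξ] (h : b + a = c) : x.comp ξ h = 0 ↔ x = 0 := by
  refine ⟨fun hx => ?_, fun hx => hx ▸ zero_comp X a ξ h⟩
  rw [comp, ← Category.assoc, Preadditive.IsIso.comp_right_eq_zero] at hx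
  exact (Preadditive.mono_iff_cancel_zero _).mp inferInstance _ x hx

lemma comp_eq_zero_iff_of_epi [∀ n : M, (shiftFunctor C n).Additive] {X X' Y : C} {a b c : M}
    (ξ : ShiftedHom X X' a) [Epi ξ] (x : ShiftedHom X' Y b) (h : b + a = c) :
    ξ.comp x h = 0 ↔ x = 0 := by
  refine ⟨fun hx => ?_, fun hx => hx ▸ comp_zero Y ξ h⟩
  have hx' := (Preadditive.epi_iff_cancel_zero ξ).mp inferInstance _ _ hx
  rwa [Preadditive.IsIso.comp_right_eq_zero, Functor.map_eq_zero_iff] at hx'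

end CategoryTheory.ShiftedHom

namespace CohSupp

section Pretriangulated

variable {C : Type*} [Category C] [Preadditive C] [HasZeroObject C] [HasShift C ℤ]
  [∀ n : ℤ, (shiftFunctor C n).Additive] [Pretriangulated C] {T : Triangle C}

lemma shiftedHom_coyoneda_exact₃ (hT : T ∈ distTriang C) {X : C} {k k' : ℤ}
    (x : ShiftedHom X T.obj₃ k) (h : 1 + k = k')
    (hx : x.comp (T.mor₃ : ShiftedHom T.obj₃ T.obj₁ (1 : ℤ)) h = 0) :
    ∃ y : ShiftedHom X T.obj₂ k, y.comp (ShiftedHom.mk₀ (0 : ℤ) rfl T.mor₂) (zero_add k) = x := by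
  subst h
  have hexact := (preadditiveCoyoneda.obj (Opposite.op X)).homologySequence_exact₃ T hT k (1 + k)
    (add_comm k 1)
  obtain ⟨y, hy⟩ := (ShortComplex.ab_exact_iff _).mp hexact x
    ((preadditiveCoyoneda_homologySequenceδ_apply T k (1 + k) (add_comm k 1) x).trans hx)
  exact ⟨y, (ShiftedHom.comp_mk₀ _ _ _ _).trans hy⟩

open Pretriangulated.Opposite in
lemma shiftedHom_yoneda_exact₃ (hT : T ∈ distTriang C) {Y : C} {k k' : ℤ}
    (x : ShiftedHom T.obj₃ Y k) (h : k + 0 = k')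
    (hx : (ShiftedHom.mk₀ (0 : ℤ) rfl T.mor₂).comp x h = 0) :
    ∃ y : ShiftedHom T.obj₁ Y (k - 1),
      ShiftedHom.comp (T.mor₃ : ShiftedHom T.obj₃ T.obj₁ (1 : ℤ)) y (sub_add_cancel k 1) = x := by
  obtain rfl : k = k' := by omega
  have hexact := (preadditiveYoneda.obj Y).homologySequence_exact₁ _ (op_distinguished T hT)
    (k - 1) k (sub_add_cancel k 1)
  obtain ⟨y, hy⟩ := (ShortComplex.ab_exact_iff _).mp hexact x
    ((ShiftedHom.mk₀_comp _ _ _ _).symm.trans hx)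
  exact ⟨y, (preadditiveYoneda_homologySequenceδ_apply T (k - 1) k _ y).symm.trans hy⟩

end Pretriangulated

variable {R : Type u} [Ring R] [HasDerivedCategory.{w} (ModuleCat.{u} R)]
  {A : Type v} [CommRing A] {ℬ : ℤ → AddSubgroup A} [GradedRing ℬ] (Z : CentralOps R A ℬ)

lemma act_zero {X Y : D R} {i j : ℤ} (a : ℬ i) : act Z a (0 : ExtO X Y j) = 0 :=
  ShiftedHom.zero_comp _ _ _ _

lemma act_eq_zero_of_neg {X Y : D R} {i j : ℤ} (hi : i < 0) (a : ℬ i) (x : ExtO X Y j) :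
    act Z a x = 0 := by
  obtain rfl : a = 0 := Subtype.ext (by simpa [Z.nonneg i hi] using a.2)
  have hzero : Z.zeta Y i 0 = 0 := by simpa using Z.zeta_add Y i 0 0
  rw [act, excomp, hzero, Functor.map_zero, zero_comp, comp_zero]

/-- An `A`-linear map of degree `d` from `Ext*(X, Y)` to `Ext*(X', Y')`. The target degree is
an argument constrained by an equation so that no casts between `Ext` groups are needed. -/
structure ExtHom (X Y X' Y' : D R) (d : ℤ) where
  app : ∀ {k k' : ℤ}, k + d = k' → ExtO X Y k →+ ExtO X' Y' k'
  app_act : ∀ {i k k' : ℤ} (h : k + d = k') (a : ℬ i) (x : ExtO X Y k),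
    app (by omega : i + k + d = i + k') (act Z a x) = act Z a (app h x)

namespace ExtHom

/-- `A`-linear thanks to the centrality of the operations. -/
noncomputable def postcomp {X Y Y' : D R} {d : ℤ} (ξ : ExtO Y Y' d) : ExtHom Z X Y X Y' d where
  app h := AddMonoidHom.mk' (fun x => ShiftedHom.comp x ξ (by omega))
    fun x y => ShiftedHom.add_comp x y ξ _
  app_act {i k k'} h a x := by
    subst h
    change ShiftedHom.comp (ShiftedHom.comp x (Z.zeta Y i a) rfl) ξ _ =
      ShiftedHom.comp (ShiftedHom.comp x ξ _) (Z.zeta Y' i a) rfl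
    rw [ShiftedHom.comp_assoc x (Z.zeta Y i a) ξ rfl (add_comm d i)
        (by omega : d + i + k = i + (k + d)),
      ShiftedHom.comp_assoc x ξ (Z.zeta Y' i a) (add_comm d k) rfl
        (by omega : i + d + k = i + (k + d))]
    exact congrArg (fun y => ShiftedHom.comp x y _) (Z.central Y Y' d i ξ a)

noncomputable def precomp {X X' Y : D R} {d : ℤ} (ξ : ExtO X' X d) : ExtHom Z X Y X' Y d where
  app h := AddMonoidHom.mk' (fun x => ShiftedHom.comp ξ x h) fun x y => ShiftedHom.comp_add ξ x y h
  app_act {i k k'} h a x :=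
    (ShiftedHom.comp_assoc ξ x (Z.zeta Y i a) h rfl (by omega : i + k + d = i + k')).symm

end ExtHom

namespace ExtSub

variable {Z} {X Y X' Y' : D R} {d : ℤ}

lemma carrier_mono {f : ℕ → ExtSub Z X Y}
    (hf : ∀ n k, (f n).carrier k ≤ (f (n + 1)).carrier k) {n m : ℕ} (hnm : n ≤ m) (k : ℤ) :
    (f n).carrier k ≤ (f m).carrier k :=
  monotone_nat_of_le_succ (fun n => hf n k) hnm

def map (φ : ExtHom Z X Y X' Y' d) (F : ExtSub Z X Y) : ExtSub Z X' Y' where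
  carrier k' :=
    { carrier := {y | ∃ k, ∃ h : k + d = k', ∃ x ∈ F.carrier k, φ.app h x = y}
      zero_mem' := ⟨k' - d, by omega, 0, zero_mem _, map_zero _⟩
      add_mem' := by
        rintro _ _ ⟨k₁, h₁, x₁, hx₁, rfl⟩ ⟨k₂, h₂, x₂, hx₂, rfl⟩
        obtain rfl : k₁ = k₂ := by omega
        exact ⟨k₁, h₁, x₁ + x₂, add_mem hx₁ hx₂, map_add _ _ _⟩
      neg_mem' := by
        rintro _ ⟨k, h, x, hx, rfl⟩
        exact ⟨k, h, -x, neg_mem hx, map_neg _ _⟩ }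
  act_mem := by
    rintro i k' a _ ⟨k, h, x, hx, rfl⟩
    exact ⟨i + k, by omega, act Z a x, F.act_mem a hx, φ.app_act h a x⟩

lemma app_mem_map (φ : ExtHom Z X Y X' Y' d) {F : ExtSub Z X Y} {k k' : ℤ} (h : k + d = k')
    {x : ExtO X Y k} (hx : x ∈ F.carrier k) : φ.app h x ∈ (F.map φ).carrier k' :=
  ⟨k, h, x, hx, rfl⟩

lemma map_mono (φ : ExtHom Z X Y X' Y' d) {F G : ExtSub Z X Y}
    (hFG : ∀ k, F.carrier k ≤ G.carrier k) (k' : ℤ) :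
    (F.map φ).carrier k' ≤ (G.map φ).carrier k' := by
  rintro _ ⟨k, h, x, hx, rfl⟩
  exact app_mem_map φ h (hFG k hx)

lemma map_eq_bot (φ : ExtHom Z X Y X' Y' d) {F : ExtSub Z X Y} {j : ℤ}
    (hF : ∀ k < j, F.carrier k = ⊥) {k' : ℤ} (hk' : k' < j + d) : (F.map φ).carrier k' = ⊥ := by
  refine eq_bot_iff.mpr ?_
  rintro _ ⟨k, h, x, hx, rfl⟩
  rw [hF k (by omega), AddSubgroup.mem_bot] at hx
  rw [hx, map_zero]
  exact zero_mem _

def comap (φ : ExtHom Z X Y X' Y' d) (F : ExtSub Z X' Y') : ExtSub Z X Y where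
  carrier k :=
    { carrier := {x | ∃ k', ∃ h : k + d = k', φ.app h x ∈ F.carrier k'}
      zero_mem' := ⟨k + d, rfl, by rw [map_zero]; exact zero_mem _⟩
      add_mem' := by
        rintro x₁ x₂ ⟨k₁, h₁, hx₁⟩ ⟨k₂, h₂, hx₂⟩
        obtain rfl : k₁ = k₂ := by omega
        exact ⟨k₁, h₁, by rw [map_add]; exact add_mem hx₁ hx₂⟩
      neg_mem' := by
        rintro x ⟨k', h, hx⟩
        exact ⟨k', h, by rw [map_neg]; exact neg_mem hx⟩ }
  act_mem := by
    rintro i k a x ⟨k', h, hx⟩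
    exact ⟨i + k', by omega, by rw [φ.app_act h a x]; exact F.act_mem a hx⟩

lemma mem_comap_iff (φ : ExtHom Z X Y X' Y' d) {F : ExtSub Z X' Y'} {k k' : ℤ} (h : k + d = k')
    {x : ExtO X Y k} : x ∈ (F.comap φ).carrier k ↔ φ.app h x ∈ F.carrier k' := by
  refine ⟨fun ⟨k'', h', hx⟩ => ?_, fun hx => ⟨k', h, hx⟩⟩
  obtain rfl : k'' = k' := by omega
  exact hx

lemma comap_mono (φ : ExtHom Z X Y X' Y' d) {F G : ExtSub Z X' Y'}
    (hFG : ∀ k, F.carrier k ≤ G.carrier k) (k : ℤ) :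
    (F.comap φ).carrier k ≤ (G.comap φ).carrier k := fun _ hx =>
  (mem_comap_iff φ rfl).mpr (hFG _ ((mem_comap_iff φ rfl).mp hx))

variable (Z) in
/-- The part of `F` in degrees `≥ j`, closed under the action because `A` lives in
non-negative degrees. -/
noncomputable def truncFrom (j : ℤ) (F : ExtSub Z X Y) : ExtSub Z X Y where
  carrier k := if j ≤ k then F.carrier k else ⊥
  act_mem := by
    intro i k a x hx
    by_cases hk : j ≤ k
    · rw [if_pos hk] at hx
      by_cases hik : j ≤ i + k
      · rw [if_pos hik]
        exact F.act_mem a hx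
      · rw [act_eq_zero_of_neg Z (by omega)]
        exact zero_mem _
    · rw [if_neg hk, AddSubgroup.mem_bot] at hx
      rw [hx, act_zero]
      exact zero_mem _

lemma truncFrom_carrier_of_le (F : ExtSub Z X Y) {j k : ℤ} (hk : j ≤ k) :
    (F.truncFrom Z j).carrier k = F.carrier k :=
  if_pos hk

lemma truncFrom_carrier_of_lt (F : ExtSub Z X Y) {j k : ℤ} (hk : k < j) :
    (F.truncFrom Z j).carrier k = ⊥ :=
  if_neg (not_le.mpr hk)

lemma truncFrom_mono {F G : ExtSub Z X Y} (hFG : ∀ k, F.carrier k ≤ G.carrier k) (j k : ℤ) :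
    (F.truncFrom Z j).carrier k ≤ (G.truncFrom Z j).carrier k := by
  obtain hk | hk := le_or_gt j k
  · rw [truncFrom_carrier_of_le F hk, truncFrom_carrier_of_le G hk]
    exact hFG k
  · rw [truncFrom_carrier_of_lt F hk]
    exact bot_le

end ExtSub

lemma evNoeth_of_subsingleton {X Y : D R} (h : ∀ j, Subsingleton (ExtO X Y j)) :
    EvNoeth Z X Y :=
  ⟨0, fun _ _ _ _ _ => ⟨0, fun _ _ k => Subsingleton.elim (α := AddSubgroup (ExtO X Y k)) _ _⟩⟩

lemma EvNoeth.of_injective {X Y X' Y' : D R} {d : ℤ} (φ : ExtHom Z X Y X' Y' d)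
    (hφ : ∀ {k k'} (h : k + d = k') (x : ExtO X Y k), φ.app h x = 0 → x = 0)
    (hev : EvNoeth Z X' Y') : EvNoeth Z X Y := by
  obtain ⟨j₀, hj₀⟩ := hev
  refine ⟨j₀ - d, fun j hj f hvan hmono => ?_⟩
  obtain ⟨N, hN⟩ := hj₀ (j + d) (by omega) (fun n => (f n).map φ)
    (fun n _ hk => ExtSub.map_eq_bot φ (hvan n) hk) (fun n => ExtSub.map_mono φ (hmono n))
  refine ⟨N, fun m hm k => le_antisymm (fun x hx => ?_) (ExtSub.carrier_mono hmono hm k)⟩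
  have hφx := ExtSub.app_mem_map φ (rfl : k + d = k + d) hx
  rw [hN m hm] at hφx
  obtain ⟨k', h', x', hx', hφx'⟩ := hφx
  obtain rfl : k' = k := by omega
  rwa [sub_eq_zero.mp (hφ rfl (x' - x) (by rw [map_sub, hφx', sub_self]))] at hx'

lemma EvNoeth.of_exact {X₁ Y₁ X Y X₂ Y₂ : D R} {d₁ d₂ : ℤ}
    (φ : ExtHom Z X₁ Y₁ X Y d₁) (ψ : ExtHom Z X Y X₂ Y₂ d₂)
    (hexact : ∀ {k k'} (h : k + d₂ = k') (x : ExtO X Y k), ψ.app h x = 0 →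
      ∃ k₁, ∃ h₁ : k₁ + d₁ = k, ∃ y, φ.app h₁ y = x)
    (h₁ : EvNoeth Z X₁ Y₁) (h₂ : EvNoeth Z X₂ Y₂) : EvNoeth Z X Y := by
  obtain ⟨j₁, hj₁⟩ := h₁
  obtain ⟨j₂, hj₂⟩ := h₂
  refine ⟨max (j₁ + d₁) (j₂ - d₂), fun j hj f hvan hmono => ?_⟩
  obtain ⟨N₂, hN₂⟩ := hj₂ (j + d₂) (by omega) (fun n => (f n).map ψ)
    (fun n _ hk => ExtSub.map_eq_bot ψ (hvan n) hk) (fun n => ExtSub.map_mono ψ (hmono n))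
  let H n := ((f n).comap φ).truncFrom Z (j - d₁)
  have mem_H {n k₁ k} (h₁ : k₁ + d₁ = k) (hk : j ≤ k) {y : ExtO X₁ Y₁ k₁} :
      y ∈ (H n).carrier k₁ ↔ φ.app h₁ y ∈ (f n).carrier k := by
    rw [ExtSub.truncFrom_carrier_of_le _ (by omega), ExtSub.mem_comap_iff φ h₁]
  obtain ⟨N₁, hN₁⟩ := hj₁ (j - d₁) (by omega) H
    (fun n _ hk => ExtSub.truncFrom_carrier_of_lt _ hk)
    (fun n => ExtSub.truncFrom_mono (ExtSub.comap_mono φ (hmono n)) _)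
  set N := max N₁ N₂
  refine ⟨N, fun m hm k => le_antisymm (fun x hx => ?_) (ExtSub.carrier_mono hmono hm k)⟩
  obtain hk | hk := lt_or_ge k j
  · rw [hvan m k hk, AddSubgroup.mem_bot] at hx
    rw [hx]
    exact zero_mem _
  have hψx := ExtSub.app_mem_map ψ (rfl : k + d₂ = k + d₂) hx
  rw [hN₂ m (by omega), ← hN₂ N (by omega)] at hψx
  obtain ⟨k', h', x', hx', hψx'⟩ := hψx
  obtain rfl : k = k' := by omega
  obtain ⟨k₁, h₁, y, hy⟩ := hexact rfl (x - x') (by rw [map_sub, hψx', sub_self])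
  have hyH : y ∈ (H m).carrier k₁ :=
    (mem_H h₁ hk).mpr (hy ▸ sub_mem hx (ExtSub.carrier_mono hmono (by omega) k hx'))
  rw [hN₁ m (by omega), ← hN₁ N (by omega)] at hyH
  simpa [hy] using add_mem hx' ((mem_H h₁ hk).mp hyH)

lemma EvNoeth.of_postcomp_mono {X Y Y' : D R} {d : ℤ} (ξ : ExtO Y Y' d) [Mono ξ]
    (h : EvNoeth Z X Y') : EvNoeth Z X Y :=
  h.of_injective Z (ExtHom.postcomp Z ξ) fun _ x => (ShiftedHom.comp_eq_zero_iff_of_mono x ξ _).mp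

lemma EvNoeth.of_precomp_epi {X X' Y : D R} {d : ℤ} (ξ : ExtO X X' d) [Epi ξ]
    (h : EvNoeth Z X Y) : EvNoeth Z X' Y :=
  h.of_injective Z (ExtHom.precomp Z ξ) fun _ x => (ShiftedHom.comp_eq_zero_iff_of_epi ξ x _).mp

lemma EvNoeth.shift_right {X Y : D R} (n : ℤ) (h : EvNoeth Z X Y) : EvNoeth Z X (Y⟦n⟧) :=
  h.of_postcomp_mono Z (𝟙 (Y⟦n⟧) : ExtO (Y⟦n⟧) Y n)

lemma EvNoeth.shift_left {X Y : D R} (n : ℤ) (h : EvNoeth Z X Y) : EvNoeth Z (X⟦n⟧) Y :=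
  h.of_precomp_epi Z
    ((shiftFunctorCompIsoId (D R) n (-n) (add_neg_cancel n)).inv.app X : ExtO X (X⟦n⟧) (-n))

lemma evNoeth_obj₃_right {X : D R} {T : Triangle (D R)} (hT : T ∈ distTriang (D R))
    (h₁ : EvNoeth Z X T.obj₁) (h₂ : EvNoeth Z X T.obj₂) : EvNoeth Z X T.obj₃ :=
  EvNoeth.of_exact Z (ExtHom.postcomp Z (ShiftedHom.mk₀ (0 : ℤ) rfl T.mor₂))
    (ExtHom.postcomp Z (T.mor₃ : ExtO T.obj₃ T.obj₁ 1))
    (fun _ x hx =>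
      let ⟨y, hy⟩ := shiftedHom_coyoneda_exact₃ hT x _ hx
      ⟨_, add_zero _, y, hy⟩)
    h₂ h₁

lemma evNoeth_obj₃_left {Y : D R} {T : Triangle (D R)} (hT : T ∈ distTriang (D R))
    (h₁ : EvNoeth Z T.obj₁ Y) (h₂ : EvNoeth Z T.obj₂ Y) : EvNoeth Z T.obj₃ Y :=
  EvNoeth.of_exact Z (ExtHom.precomp Z (T.mor₃ : ExtO T.obj₃ T.obj₁ 1))
    (ExtHom.precomp Z (ShiftedHom.mk₀ (0 : ℤ) rfl T.mor₂))
    (fun h x hx =>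
      let ⟨y, hy⟩ := shiftedHom_yoneda_exact₃ hT x h hx
      ⟨_, sub_add_cancel _ 1, y, hy⟩)
    h₁ h₂

lemma IsThickSet.of_retract_closed {S : Set (D R)} (hzero : ∀ X : D R, IsZero X → X ∈ S)
    (hshift : ∀ X : D R, X ∈ S → X⟦(1 : ℤ)⟧ ∈ S ∧ X⟦(-1 : ℤ)⟧ ∈ S)
    (htri : ∀ T ∈ distTriang (D R), T.obj₁ ∈ S → T.obj₂ ∈ S → T.obj₃ ∈ S)
    (hretract : ∀ (X Y : D R) (ι : X ⟶ Y) (ρ : Y ⟶ X), ι ≫ ρ = 𝟙 X → Y ∈ S → X ∈ S) :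
    IsThickSet S :=
  ⟨hzero, fun X Y e => hretract Y X e.inv e.hom e.inv_hom_id, hshift, htri, hretract⟩

theorem isThickSet_evNoeth_right (X : D R) : IsThickSet {Y : D R | EvNoeth Z X Y} :=
  .of_retract_closed
    (fun _ hY => evNoeth_of_subsingleton Z fun j =>
      ⟨((shiftFunctor (D R) j).map_isZero hY).eq_of_tgt⟩)
    (fun _ hY => ⟨hY.shift_right Z 1, hY.shift_right Z (-1)⟩)
    (fun _ hT => evNoeth_obj₃_right Z hT)
    (fun _ _ ι ρ hιρ hY =>
      have : IsSplitMono ι := .mk' ⟨ρ, hιρ⟩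
      hY.of_postcomp_mono Z (ShiftedHom.mk₀ (0 : ℤ) rfl ι))

theorem isThickSet_evNoeth_left (Y : D R) : IsThickSet {X : D R | EvNoeth Z X Y} :=
  .of_retract_closed
    (fun _ hX => evNoeth_of_subsingleton Z fun _ => ⟨hX.eq_of_src⟩)
    (fun _ hX => ⟨hX.shift_left Z 1, hX.shift_left Z (-1)⟩)
    (fun _ hT => evNoeth_obj₃_left Z hT)
    (fun _ _ ι ρ hιρ hX =>
      have : IsSplitEpi ρ := .mk' ⟨ι, hιρ⟩
      hX.of_precomp_epi Z (ShiftedHom.mk₀ (0 : ℤ) rfl ρ))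

/-- Let `A` be a ring of central cohomology operations on `D(R)` and
`M` a complex of `R`-modules.  The full subcategory of `D(R)` of objects `L` with
`Ext*_R(M,L)` eventually noetherian over `A` is thick, and likewise for the objects `L`
with `Ext*_R(L,M)` eventually noetherian. -/
theorem statement_9 {R : Type u} [Ring R] [HasDerivedCategory.{w} (ModuleCat.{u} R)]
    {A : Type v} [CommRing A] {ℬ : ℤ → AddSubgroup A} [GradedRing ℬ]
    (Z : CentralOps R A ℬ) (M : Cx R) :
    IsThickSet {L : D R | EvNoeth Z (dQ.obj M) L} ∧
    IsThickSet {L : D R | EvNoeth Z L (dQ.obj M)} :=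
  ⟨isThickSet_evNoeth_right Z _, isThickSet_evNoeth_left Z _⟩

end CohSupp
end

section
/- Let R be an associative ring, 𝒜 a ring of central cohomology operations on D(R), and M, N complexes of R-modules. If the graded 𝒜-module Ext*_R(M,N) is eventually zero, then Supp*_𝒜(M,N) = ∅. Conversely, if Ext*_R(M,N) is eventually noetherian over 𝒜 and Supp*_𝒜(M,N) = ∅, then Ext*_R(M,N) is eventually zero. -/
/-! Core framework: complexes of modules, semiprojective complexes, hard truncations,
syzygy complexes, the derived category, Ext groups, central cohomology operations,
graded supports and thick subcategories.

Conventions: we use cochain complexes indexed by `ℤ`; the homological degree `i`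
of the paper corresponds to the cochain degree `-i`, so that the homological
shift `Σ^d` is the categorical shift `⟦d⟧` and the homological hard truncation
`P_{⩾ n}` is the cochain hard truncation in degrees `⩽ -n`. -/

open CategoryTheory Limits Pretriangulated

universe w v u

/-! If `Ext` vanishes in high degrees, then for `𝔭 ∈ Proj A` and a homogeneous `s ∉ 𝔭` of
positive degree, the powers `sᵏ ∉ 𝔭` move any homogeneous `x` into degrees where `Ext`
vanishes, so `𝔭` is not in the support.

Conversely, if the support is empty, no homogeneous prime in `Proj A` contains the annihilator
of a homogeneous `x`, so every homogeneous element of positive degree lies in the radical of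
`ann x`. Noetherianity of `Ext^{≥ j₀}` makes `A^{>0}` finitely generated modulo `ann x`, so a
power of the ideal of these generators kills `x`, and by counting degrees so does `A^{≥ E}` for
`E ≫ 0`. It also makes `Ext^{≥ j₀}` finitely generated, and in degrees beyond all the
generators and their bounds `E` every element is a sum of terms `a · g` with `deg a ≥ E`,
hence zero. -/

namespace CohSupp

open DirectSum Filter

section GradedRing

variable {A : Type v} [CommRing A] {ℬ : ℤ → AddSubgroup A} [GradedRing ℬ]

lemma coe_decompose_mul_of_right_mem_sub {z : A} {d : ℤ} (hz : z ∈ ℬ d) (c : A) (e : ℤ) :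
    (decompose ℬ (c * z) e : A) = decompose ℬ c (e - d) * z := by
  have h := coe_decompose_mul_add_of_right_mem (i := e - d) ℬ (a := c) hz
  rwa [sub_add_cancel] at h

lemma mul_mem_sup_pow_succ {I J : Ideal A} {k : ℕ} {x z : A} (hx : x ∈ I ⊔ J ^ k) (hz : z ∈ J) :
    x * z ∈ I ⊔ J ^ (k + 1) := by
  have hle : (I ⊔ J ^ k) * J ≤ I ⊔ J ^ (k + 1) := by
    rw [Ideal.sup_mul, pow_succ]
    exact sup_le_sup_right Ideal.mul_le_left _
  exact hle (Ideal.mul_mem_mul hx hz)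

/-- Each factor from `S` lowers the degree by at most `D`: the degree-`e` component of
`q + ∑ cₜ zₜ` is `q_e + ∑ (cₜ)_{e - deg zₜ} zₜ`. -/
theorem mem_sup_span_pow_of_mul_lt {I : Ideal A} (hI : I.IsHomogeneous ℬ) {S : Set A} {D : ℤ}
    (hD : 0 ≤ D) (hS : ∀ z ∈ S, ∃ d ≤ D, z ∈ ℬ d)
    (hcover : ∀ e, 0 < e → ∀ s ∈ ℬ e, s ∈ I ⊔ Ideal.span S) (k : ℕ) {e : ℤ} (he : k * D < e)
    {s : A} (hs : s ∈ ℬ e) : s ∈ I ⊔ Ideal.span S ^ k := by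
  induction k generalizing e s with
  | zero => simp
  | succ k ih =>
    have hterm : ∀ c, ∀ z ∈ S, GradedRing.proj ℬ e (c * z) ∈ I ⊔ Ideal.span S ^ (k + 1) := by
      intro c z hz
      obtain ⟨d, hdD, hzd⟩ := hS z hz
      rw [GradedRing.proj_apply, coe_decompose_mul_of_right_mem_sub hzd]
      refine mul_mem_sup_pow_succ (ih ?_ (SetLike.coe_mem _)) (Ideal.subset_span hz)
      push_cast at he
      linarith
    have he0 : 0 < e := by
      have : 0 ≤ ((k : ℤ) + 1) * D := by positivity
      push_cast at he
      linarith
    obtain ⟨q, hq, w, hw, hqw⟩ := Submodule.mem_sup.1 (hcover e he0 s hs)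
    obtain ⟨n, c, z, rfl⟩ := Submodule.mem_span_set'.1 hw
    have hs' : s = GradedRing.proj ℬ e q + ∑ t, GradedRing.proj ℬ e (c t * z t) := by
      simp only [smul_eq_mul] at hqw
      rw [← map_sum, ← map_add, hqw, GradedRing.proj_apply, decompose_of_mem_same ℬ hs]
    rw [hs']
    exact add_mem (Submodule.mem_sup_left (hI e hq))
      (sum_mem fun t _ => hterm (c t) (z t) (z t).2)

end GradedRing

section Action

variable {R : Type u} [Ring R] [HasDerivedCategory.{w} (ModuleCat.{u} R)]
variable {A : Type v} [CommRing A] {ℬ : ℤ → AddSubgroup A} [GradedRing ℬ]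

lemma CentralOps.eq_zero_of_lt_zero (Z : CentralOps R A ℬ) {i : ℤ} (hi : i < 0) (a : ℬ i) :
    a = 0 :=
  Subtype.ext (AddSubgroup.mem_bot.1 (Z.nonneg i hi ▸ a.2))

variable (Z : CentralOps R A ℬ) {X Y : D R}

/-- `act`, with a free target degree so that no transport along equalities of degrees is
needed. -/
noncomputable def actAt {i j k : ℤ} (h : i + j = k) : ℬ i →+ ExtO X Y j →+ ExtO X Y k :=
  AddMonoidHom.mk'
    (fun a => AddMonoidHom.mk' (fun x => ShiftedHom.comp (C := D R) x (Z.zeta Y i a) (by omega))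
      fun x y => ShiftedHom.add_comp x y _ _)
    fun a b => by
      ext x
      simp [Z.zeta_add]

lemma act_eq_actAt {i j : ℤ} (a : ℬ i) (x : ExtO X Y j) : act Z a x = actAt Z rfl a x := rfl

lemma actAt_congr {i i' j k : ℤ} {a : ℬ i} {a' : ℬ i'} (ha : (a : A) = a') (h : i + j = k)
    (h' : i' + j = k) (x : ExtO X Y j) : actAt Z h a x = actAt Z h' a' x := by
  obtain rfl : i = i' := by omega
  obtain rfl := Subtype.ext ha
  rfl

lemma actAt_actAt {i₁ i₂ j k₁ k₂ : ℤ} (h₁ : i₁ + j = k₁) (h₂ : i₂ + k₁ = k₂)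
    (h : i₁ + i₂ + j = k₂) (a : ℬ i₂) (b : ℬ i₁) (x : ExtO X Y j) :
    actAt Z h₂ a (actAt Z h₁ b x) = actAt Z h ⟨b * a, SetLike.mul_mem_graded b.2 a.2⟩ x := by
  change ShiftedHom.comp (C := D R) (ShiftedHom.comp (C := D R) x _ _) _ _ = _
  rw [ShiftedHom.comp_assoc _ _ _ _ (show i₂ + i₁ = i₁ + i₂ by omega) (by omega)]
  exact congrArg (ShiftedHom.comp x · _) (Z.zeta_mul Y i₁ i₂ b a).symm

end Action

section Annihilator

variable {R : Type u} [Ring R] [HasDerivedCategory.{w} (ModuleCat.{u} R)]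
variable {A : Type v} [CommRing A] {ℬ : ℤ → AddSubgroup A} [GradedRing ℬ]
variable (Z : CentralOps R A ℬ) {X Y : D R}

def annihilator {j : ℤ} (x : ExtO X Y j) : Ideal A where
  carrier := {u | ∀ i, actAt Z rfl (decompose ℬ u i) x = 0}
  add_mem' {u v} hu hv i := by simp [decompose_add, hu i, hv i]
  zero_mem' i := by simp
  smul_mem' c u hu := by
    induction c using DirectSum.Decomposition.inductionOn ℬ with
    | zero => simp
    | @homogeneous i₁ a =>
      intro i
      have hdec : (decompose ℬ ((a : A) * u) i : A) = decompose ℬ u (i - i₁) * a := by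
        have h := coe_decompose_mul_add_of_left_mem (j := i - i₁) ℬ (b := u) a.2
        rw [add_sub_cancel] at h
        rw [h, mul_comm]
      rw [smul_eq_mul, actAt_congr Z (a' := ⟨_, SetLike.mul_mem_graded (SetLike.coe_mem _) a.2⟩)
        hdec rfl (by omega),
        ← actAt_actAt Z rfl (by omega), hu, map_zero]
    | add a b ha hb => simp_all [add_mul, decompose_add]

variable {Z}

lemma mem_annihilator_iff {i j k : ℤ} (h : i + j = k) (a : ℬ i) (x : ExtO X Y j) :
    (a : A) ∈ annihilator Z x ↔ actAt Z h a x = 0 := by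
  subst h
  refine ⟨fun ha => by simpa using ha i, fun ha i' => ?_⟩
  rcases eq_or_ne i i' with rfl | hne
  · simpa using ha
  · simp [decompose_coe, of_eq_of_ne _ _ _ hne.symm]

lemma annihilator_isHomogeneous {j : ℤ} (x : ExtO X Y j) :
    (annihilator Z x).IsHomogeneous ℬ :=
  fun i _ hu => (mem_annihilator_iff rfl _ x).2 (hu i)

end Annihilator

section Support

variable {R : Type u} [Ring R] [HasDerivedCategory.{w} (ModuleCat.{u} R)]
variable {A : Type v} [CommRing A] {ℬ : ℤ → AddSubgroup A} [GradedRing ℬ]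
variable {Z : CentralOps R A ℬ} {X Y : D R}

lemma mem_supp_of_annihilator_le {p : Ideal A} (hp : p ∈ ProjSet ℬ) {j : ℤ} (x : ExtO X Y j)
    (hle : annihilator Z x ≤ p) : p ∈ supp Z X Y := by
  refine ⟨hp, j, x, fun hx => hp.1.ne_top ((Ideal.eq_top_iff_one p).2 (hle ?_)), ?_⟩
  · exact (mem_annihilator_iff (a := ⟨1, SetLike.one_mem_graded ℬ⟩) rfl x).2 (by simp [hx])
  · exact fun i s hs h0 => hs (hle ((mem_annihilator_iff rfl s x).2 h0))

lemma mem_radical_annihilator (hsupp : supp Z X Y = ∅) {j : ℤ} (x : ExtO X Y j) {d : ℤ}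
    (hd : 0 < d) {z : A} (hz : z ∈ ℬ d) : z ∈ (annihilator Z x).radical := by
  rw [(annihilator_isHomogeneous x).radical_eq, Submodule.mem_sInf]
  rintro p ⟨hhom, hle, hprime⟩
  by_contra hzp
  have hp : p ∈ ProjSet ℬ := ⟨hprime, hhom, fun h => hzp (h d hd hz)⟩
  simpa [hsupp] using mem_supp_of_annihilator_le hp x hle

theorem supp_eq_empty_of_evZero (h : EvZero X Y) : supp Z X Y = ∅ := by
  obtain ⟨j₀, hj₀⟩ := h
  refine Set.eq_empty_of_forall_notMem fun p ⟨⟨hprime, _, hp⟩, j, x, _, hx⟩ => ?_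
  push Not at hp
  obtain ⟨i, hi, hi'⟩ := hp
  obtain ⟨s, hs, hsp⟩ := Set.not_subset.1 hi'
  obtain ⟨k, hk⟩ : ∃ k : ℕ, j₀ - j ≤ k := ⟨(j₀ - j).toNat, Int.self_le_toNat _⟩
  have hsk : s ^ k ∉ p := fun h => hsp (hprime.mem_of_pow_mem k h)
  have hdeg : j₀ ≤ k • i + j := by
    rw [nsmul_eq_mul]
    nlinarith
  have := hj₀ _ hdeg
  exact hx (k • i) ⟨s ^ k, SetLike.pow_mem_graded k hs⟩ hsk (Subsingleton.elim _ _)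

end Support

section Noetherian

variable {R : Type u} [Ring R] [HasDerivedCategory.{w} (ModuleCat.{u} R)]
variable {A : Type v} [CommRing A] {ℬ : ℤ → AddSubgroup A} [GradedRing ℬ]
variable (Z : CentralOps R A ℬ) {X Y : D R}

noncomputable def listSpan (L : List (Σ d : ℤ, ExtO X Y d)) : ExtSub Z X Y where
  carrier c := AddSubgroup.closure
    {w | ⟨c, w⟩ ∈ L ∨ ∃ g ∈ L, ∃ (i : ℤ) (a : ℬ i) (h : i + g.1 = c), w = actAt Z h a g.2}
  act_mem {i c} a w hw := by
    rw [act_eq_actAt]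
    induction hw using AddSubgroup.closure_induction with
    | mem w hw =>
      refine AddSubgroup.subset_closure (Or.inr ?_)
      rcases hw with hw | ⟨g, hg, i', b, h, rfl⟩
      · exact ⟨_, hw, i, a, rfl, rfl⟩
      · exact ⟨g, hg, i' + i, _, by omega, actAt_actAt Z h rfl _ a b g.2⟩
    | zero => simp
    | add w w' _ _ hw hw' => simpa using add_mem hw hw'
    | neg w _ hw => simpa using hw

lemma listSpan_carrier_eq_bot {L : List (Σ d : ℤ, ExtO X Y d)} {c : ℤ}
    (hdeg : ∀ g ∈ L, g.1 ≠ c)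
    (hkill : ∀ g ∈ L, ∀ (i : ℤ) (h : i + g.1 = c) (a : ℬ i), actAt Z h a g.2 = 0) :
    (listSpan Z L).carrier c = ⊥ := by
  rw [eq_bot_iff, listSpan, AddSubgroup.closure_le]
  rintro w (hw | ⟨g, hg, i, a, h, rfl⟩)
  · exact absurd rfl (hdeg _ hw)
  · exact hkill g hg i h a

/-- The graded submodule `J · x`; its degree-`c` part is `(J ∩ A^{c - dx}) · x`. -/
noncomputable def idealSpan (J : Ideal A) {dx : ℤ} (x : ExtO X Y dx) : ExtSub Z X Y where
  carrier c := (J.toAddSubgroup.comap (ℬ (c - dx)).subtype).map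
    ((actAt Z (sub_add_cancel c dx)).flip x)
  act_mem {i c} a w hw := by
    obtain ⟨b, hb, rfl⟩ := AddSubgroup.mem_map.1 hw
    refine AddSubgroup.mem_map.2
      ⟨⟨b * a, by convert SetLike.mul_mem_graded b.2 a.2 using 2; ring⟩, J.mul_mem_right _ hb, ?_⟩
    rw [AddMonoidHom.flip_apply, AddMonoidHom.flip_apply, act_eq_actAt,
      actAt_actAt Z _ _ (by omega)]
    exact actAt_congr Z (by rfl) _ _ x

variable {Z}

lemma actAt_mem_idealSpan {J : Ideal A} {dx i c : ℤ} (x : ExtO X Y dx) (h : i + dx = c)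
    {a : ℬ i} (ha : (a : A) ∈ J) : actAt Z h a x ∈ (idealSpan Z J x).carrier c := by
  subst h
  exact AddSubgroup.mem_map.2 ⟨⟨a, by simp⟩, ha, actAt_congr Z (by rfl) _ _ x⟩

lemma exists_of_mem_idealSpan {J : Ideal A} {dx i c : ℤ} {x : ExtO X Y dx} (h : i + dx = c)
    {w : ExtO X Y c} (hw : w ∈ (idealSpan Z J x).carrier c) :
    ∃ b : ℬ i, (b : A) ∈ J ∧ actAt Z h b x = w := by
  subst h
  obtain ⟨b, hb, rfl⟩ := AddSubgroup.mem_map.1 hw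
  exact ⟨⟨b, by simpa using b.2⟩, hb, actAt_congr Z (by rfl) _ _ x⟩

lemma idealSpan_carrier_eq_bot (J : Ideal A) {dx c : ℤ} (x : ExtO X Y dx) (hc : c < dx) :
    (idealSpan Z J x).carrier c = ⊥ := by
  rw [eq_bot_iff]
  rintro _ ⟨b, -, rfl⟩
  rw [Z.eq_zero_of_lt_zero (by omega) b, map_zero]
  exact zero_mem _

lemma idealSpan_mono {J J' : Ideal A} (hJ : J ≤ J') {dx : ℤ} (x : ExtO X Y dx) (c : ℤ) :
    (idealSpan Z J x).carrier c ≤ (idealSpan Z J' x).carrier c :=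
  AddSubgroup.map_mono (AddSubgroup.comap_mono hJ)

lemma NoethFrom.exists_maximal {j₀ : ℤ} (hN : NoethFrom Z X Y j₀) {ι : Type*} [Nonempty ι]
    (F : ι → ExtSub Z X Y) (hF : ∀ t j, j < j₀ → (F t).carrier j = ⊥) :
    ∃ t, ∀ t', (∀ j, (F t).carrier j ≤ (F t').carrier j) →
      ∀ j, (F t').carrier j ≤ (F t).carrier j := by
  by_contra! hno
  choose next hle hlt using hno
  obtain ⟨n, hn⟩ := hN (fun n => F (next^[n] (Classical.arbitrary ι))) (fun n => hF _)
    (fun n j => by simpa only [Function.iterate_succ_apply'] using hle _ j)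
  obtain ⟨j, hj⟩ := hlt (next^[n] (Classical.arbitrary ι))
  exact hj (by simpa only [Function.iterate_succ_apply'] using (hn (n + 1) n.le_succ j).le)

theorem NoethFrom.exists_listSpan {j₀ : ℤ} (hN : NoethFrom Z X Y j₀) :
    ∃ L : List (Σ d : ℤ, ExtO X Y d), (∀ g ∈ L, j₀ ≤ g.1) ∧
      ∀ c, j₀ ≤ c → ∀ w : ExtO X Y c, w ∈ (listSpan Z L).carrier c := by
  let ι := {L : List (Σ d : ℤ, ExtO X Y d) // ∀ g ∈ L, j₀ ≤ g.1}
  have : Nonempty ι := ⟨⟨[], by simp⟩⟩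
  obtain ⟨⟨L, hL⟩, hmax⟩ := hN.exists_maximal (fun L : ι => listSpan Z L.1) fun L c hc =>
    listSpan_carrier_eq_bot Z (fun g hg => (hc.trans_le (L.2 g hg)).ne') fun g hg i h a => by
      rw [Z.eq_zero_of_lt_zero (by linarith [L.2 g hg]) a, map_zero, AddMonoidHom.zero_apply]
  refine ⟨L, hL, fun c hc w => hmax ⟨⟨c, w⟩ :: L, ?_⟩ ?_ c ?_⟩
  · simpa [hc] using hL
  · refine fun j => AddSubgroup.closure_mono ?_
    rintro v (hv | ⟨g, hg, hv⟩)
    · exact Or.inl (List.mem_cons_of_mem _ hv)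
    · exact Or.inr ⟨g, List.mem_cons_of_mem _ hg, hv⟩
  · exact AddSubgroup.subset_closure (Or.inl List.mem_cons_self)

/-- For `S` with `(S) · x` maximal, `s · x ∈ (S) · x` forces `s ∈ ann x + (S)`. -/
theorem NoethFrom.exists_finset_sup_annihilator {j₀ : ℤ} (hN : NoethFrom Z X Y j₀) {dx : ℤ}
    (hdx : j₀ ≤ dx) (x : ExtO X Y dx) :
    ∃ S : Finset A, (∀ z ∈ S, ∃ d, 0 < d ∧ z ∈ ℬ d) ∧
      ∀ e, 0 < e → ∀ s ∈ ℬ e, s ∈ annihilator Z x ⊔ Ideal.span S := by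
  classical
  let ι := {S : Finset A // ∀ z ∈ S, ∃ d, 0 < d ∧ z ∈ ℬ d}
  have : Nonempty ι := ⟨⟨∅, by simp⟩⟩
  obtain ⟨⟨S, hS⟩, hmax⟩ := hN.exists_maximal
    (fun S : ι => idealSpan Z (Ideal.span S.1) x)
    fun S c hc => idealSpan_carrier_eq_bot _ x (by omega)
  refine ⟨S, hS, fun e he s hs => ?_⟩
  let S' : ι := ⟨insert s S, by simpa using ⟨⟨e, he, hs⟩, hS⟩⟩
  have hsx := hmax S' (fun j => idealSpan_mono (Ideal.span_mono (by simp [S'])) x j) (e + dx)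
    (actAt_mem_idealSpan (a := ⟨s, hs⟩) x rfl (Ideal.subset_span (by simp [S'])))
  obtain ⟨b, hbS, hb⟩ := exists_of_mem_idealSpan rfl hsx
  have hsb : ((⟨s, hs⟩ - b : ℬ e) : A) ∈ annihilator Z x := by
    rw [mem_annihilator_iff rfl, map_sub, AddMonoidHom.sub_apply, hb, sub_self]
  simpa using add_mem (Submodule.mem_sup_left hsb) (Submodule.mem_sup_right hbS)

theorem NoethFrom.eventually_subset_annihilator {j₀ : ℤ} (hN : NoethFrom Z X Y j₀)
    (hsupp : supp Z X Y = ∅) {dx : ℤ} (hdx : j₀ ≤ dx) (x : ExtO X Y dx) :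
    ∀ᶠ e in atTop, (ℬ e : Set A) ⊆ annihilator Z x := by
  obtain ⟨S, hS, hcover⟩ := hN.exists_finset_sup_annihilator hdx x
  have hrad : Ideal.span S ≤ (annihilator Z x).radical := Ideal.span_le.2 fun z hz =>
    let ⟨_, hd, hzd⟩ := hS z hz
    mem_radical_annihilator hsupp x hd hzd
  obtain ⟨n, hn⟩ := Ideal.exists_pow_le_of_le_radical_of_fg hrad ⟨S, rfl⟩
  obtain ⟨D, hD, hSD⟩ : ∃ D : ℤ, 0 ≤ D ∧ ∀ z ∈ S, ∃ d ≤ D, z ∈ ℬ d :=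
    ((eventually_ge_atTop 0).and ((eventually_all_finset S).2 fun z hz =>
      let ⟨d, _, hzd⟩ := hS z hz
      (eventually_ge_atTop d).mono fun D hD => ⟨d, hD, hzd⟩)).exists
  filter_upwards [eventually_gt_atTop ((n : ℤ) * D)] with e he s hs
  exact sup_le le_rfl hn <| mem_sup_span_pow_of_mul_lt (annihilator_isHomogeneous x) hD hSD
    hcover n he hs

theorem evZero_of_evNoeth (hN : EvNoeth Z X Y) (hsupp : supp Z X Y = ∅) : EvZero X Y := by
  obtain ⟨j₀, hj₀⟩ := hN
  obtain ⟨L, hL, hspan⟩ := (hj₀ j₀ le_rfl).exists_listSpan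
  have hgen : ∀ g ∈ L, ∀ᶠ c in atTop,
      g.1 < c ∧ ∀ (i : ℤ) (h : i + g.1 = c) (a : ℬ i), actAt Z h a g.2 = 0 := by
    intro g hg
    obtain ⟨E, hE⟩ := eventually_atTop.1
      ((hj₀ j₀ le_rfl).eventually_subset_annihilator hsupp (hL g hg) g.2)
    filter_upwards [eventually_gt_atTop g.1, eventually_ge_atTop (E + g.1)] with c hc hcE
    exact ⟨hc, fun i h a => (mem_annihilator_iff h a g.2).1 (hE i (by omega) a.2)⟩
  obtain ⟨c₀, hc₀⟩ := eventually_atTop.1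
    ((eventually_ge_atTop j₀).and ((L.finite_toSet.eventually_all).2 hgen))
  refine ⟨c₀, fun c hc => ⟨fun w w' => ?_⟩⟩
  obtain ⟨hjc, hLc⟩ := hc₀ c hc
  have hbot := listSpan_carrier_eq_bot Z (fun g hg => (hLc g hg).1.ne) fun g hg => (hLc g hg).2
  have hzero : ∀ v : ExtO X Y c, v = 0 := fun v =>
    AddSubgroup.mem_bot.1 (hbot ▸ hspan c hjc v)
  rw [hzero w, hzero w']

end Noetherian

/-- Let `A` be a ring of central cohomology operations on `D(R)` and
`M`, `N` complexes of `R`-modules.  If `Ext*_R(M,N)` is eventually zero then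
`Supp*_A(M,N) = ∅`; conversely, if `Ext*_R(M,N)` is eventually noetherian over `A` and
`Supp*_A(M,N) = ∅`, then `Ext*_R(M,N)` is eventually zero. -/
theorem statement_14 {R : Type u} [Ring R] [HasDerivedCategory.{w} (ModuleCat.{u} R)]
    {A : Type v} [CommRing A] {ℬ : ℤ → AddSubgroup A} [GradedRing ℬ]
    (Z : CentralOps R A ℬ) (M N : Cx R) :
    (EvZero (dQ.obj M) (dQ.obj N) → supp Z (dQ.obj M) (dQ.obj N) = ∅) ∧
    (EvNoeth Z (dQ.obj M) (dQ.obj N) → supp Z (dQ.obj M) (dQ.obj N) = ∅ →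
      EvZero (dQ.obj M) (dQ.obj N)) :=
  ⟨supp_eq_empty_of_evZero, evZero_of_evNoeth⟩

end CohSupp
end
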